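/- Let (W_n)_{n≥0} be an odometer based construction sequence with coefficient sequence (k_n) and limit K, and let ν be any shift-invariant Borel probability measure on K. Then the parsing map φ : K → O into the odometer O associated to (k_n) (defined by φ(x)_n = r_{n+1}(x) mod K_{n+1}) is Borel measurable, satisfies φ ∘ sh = T_O ∘ φ, and the pushforward φ_*ν equals the Haar probability measure on O. In particular, any shift-invariant measure on the limit of an odometer based construction sequence has the corresponding odometer as a measure-theoretic factor. -/

import Mathlib

open MeasureTheory

namespace OdoPaper

/-- The shift map `sh` on bi-infinite sequences: `(sh x)(n) = x(n+1)`. -/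
def shift {σ : Type*} (x : ℤ → σ) : ℤ → σ := fun m => x (m + 1)

/-- The `n`-th iterate (`n : ℤ`) of the shift map: `(shiftZ n x)(m) = x(m+n)`. -/
def shiftZ {σ : Type*} (n : ℤ) (x : ℤ → σ) : ℤ → σ := fun m => x (m + n)

/-- `Kseq k n = K_n`, where `K_0 = 1` and `K_{n+1} = K_n * k_n`. -/
def Kseq (k : ℕ → ℕ) : ℕ → ℕ
  | 0 => 1
  | n + 1 => Kseq k n * k n

/-- Compatibility of a sequence `x` with `x n : ZMod (K_{n+1})` under the canonical
projections `ZMod (K_{n+2}) → ZMod (K_{n+1})`. -/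
def odoCompat (k : ℕ → ℕ) (x : ∀ n : ℕ, ZMod (Kseq k (n + 1))) : Prop :=
  ∀ n : ℕ, ZMod.castHom (dvd_mul_right (Kseq k (n + 1)) (k (n + 1)))
      (ZMod (Kseq k (n + 1))) (x (n + 1)) = x n

/-- The odometer associated to the coefficient sequence `k`, as an additive subgroup of
`∏_n ZMod (K_{n+1})`. -/
def odometerSubgroup (k : ℕ → ℕ) : AddSubgroup (∀ n : ℕ, ZMod (Kseq k (n + 1))) where
  carrier := { x | odoCompat k x }
  zero_mem' := by intro n; exact map_zero _
  add_mem' := by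
    intro a b ha hb n
    exact (map_add (ZMod.castHom _ _) (a (n + 1)) (b (n + 1))).trans (congrArg₂ (· + ·) (ha n) (hb n))
  neg_mem' := by
    intro a ha n
    exact (map_neg (ZMod.castHom _ _) (a (n + 1))).trans (congrArg Neg.neg (ha n))

/-- The odometer `O` associated to the coefficient sequence `k`. -/
abbrev Odometer (k : ℕ → ℕ) := ↥(odometerSubgroup k)

/-- The element `1̄ = (1 mod K_{n+1})_n` of the odometer. -/
def oneBar (k : ℕ → ℕ) : Odometer k := ⟨fun _ => 1, fun _ => map_one _⟩

/-- The odometer map `T_O` : translation by `1̄`. -/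
def odoMap (k : ℕ → ℕ) (x : Odometer k) : Odometer k := x + oneBar k

/-- Each factor `ZMod m` carries the discrete topology. -/
instance (n : ℕ) : TopologicalSpace (ZMod n) := ⊥
instance (n : ℕ) : DiscreteTopology (ZMod n) := ⟨rfl⟩
/-- Each factor `ZMod m` carries the discrete (Borel) σ-algebra; the product σ-algebra
on `∏_n ZMod (K_{n+1})` (and hence the subtype σ-algebra on the odometer) is then the
Borel σ-algebra of the product topology. -/
instance (n : ℕ) : MeasurableSpace (ZMod n) := ⊤
instance (n : ℕ) : DiscreteMeasurableSpace (ZMod n) := ⟨fun _ => trivial⟩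

/-- `w` occurs as a contiguous subword of `l` starting at position `p`. -/
def occursAt {σ : Type*} (w l : List σ) (p : ℕ) : Prop :=
  p + w.length ≤ l.length ∧ (l.drop p).take w.length = w

/-- The finite contiguous subword `x↾[a, a+m)` of `x : ℤ → σ`. -/
def subwordAt {σ : Type*} (x : ℤ → σ) (a : ℤ) (m : ℕ) : List σ :=
  List.ofFn (fun i : Fin m => x (a + i))

/-- The limit `K` of a construction sequence: all bi-infinite sequences each of whose finite
contiguous subwords occurs as a contiguous subword of some word in some `W n`. -/
def CSLimit {σ : Type*} (W : ℕ → Set (List σ)) : Set (ℤ → σ) :=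
  { x | ∀ (a : ℤ) (m : ℕ), ∃ n, ∃ w ∈ W n, ∃ p, occursAt (subwordAt x a m) w p }

/-- `(W_n)` is an odometer based construction sequence over the finite alphabet `σ` with
coefficient sequence `k`:  `W 0` consists of the one-letter words; every word of `W n` has
length `K_n`; every word of `W (n+1)` is a concatenation of `k n` words from `W n`; each
`W n` is uniquely readable; and every `n`-word occurs in every `(n+1)`-word. -/
structure OdometerBasedCS (σ : Type*) [Fintype σ] (k : ℕ → ℕ) (W : ℕ → Set (List σ)) :
    Prop where
  two_le : ∀ n, 2 ≤ k n
  w_zero : W 0 = { l : List σ | ∃ a : σ, l = [a] }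
  nonempty : ∀ n, (W n).Nonempty
  finite : ∀ n, (W n).Finite
  length_eq : ∀ n, ∀ w ∈ W n, w.length = Kseq k n
  concat : ∀ n, ∀ w' ∈ W (n + 1),
    ∃ g : Fin (k n) → List σ, (∀ i, g i ∈ W n) ∧ w' = (List.ofFn g).flatten
  unique_readable : ∀ n, ∀ u ∈ W n, ∀ v ∈ W n, ∀ w ∈ W n, ∀ p,
    occursAt w (u ++ v) p → p = 0 ∨ p = Kseq k n
  subword : ∀ n, ∀ w ∈ W n, ∀ w' ∈ W (n + 1), ∃ p, occursAt w w' p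

/-- `μ` is the Haar probability measure on the odometer: the unique translation-invariant
Borel probability measure on the compact group `O`. -/
def IsHaarProb {k : ℕ → ℕ} (μ : Measure (Odometer k)) : Prop :=
  IsProbabilityMeasure μ ∧ ∀ g : Odometer k, Measure.map (fun x => g + x) μ = μ

/-! A point `x` of the limit can be cut into words of `W N` along a unique residue class of
positions mod `K_N`: existence because every finite window of `x` lies in a word of some `W m`,
`m ≥ N`, which is a concatenation of `N`-words (and finitely many offsets must recur for
arbitrarily large windows); uniqueness by unique readability. Shifting `x` moves the cuts by one,
so `φ ∘ sh = T_O ∘ φ` on the limit and `φ_*ν` is `T_O`-invariant. Translation by `g` acts on the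
`n`-th coordinate like `(g_n).val` steps of `T_O`, and preimages of the coordinates form a
π-system generating the σ-algebra of `O`, so `φ_*ν` is translation invariant. -/

section Words
variable {σ : Type*}

@[simp] lemma length_subwordAt (x : ℤ → σ) (a : ℤ) (m : ℕ) : (subwordAt x a m).length = m := by
  simp [subwordAt]

lemma subwordAt_add (x : ℤ → σ) (a : ℤ) (m₁ m₂ : ℕ) :
    subwordAt x a (m₁ + m₂) = subwordAt x a m₁ ++ subwordAt x (a + m₁) m₂ := by
  simp only [subwordAt, List.ofFn_add, Fin.val_natAdd, Nat.cast_add, add_assoc]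
  rfl

lemma take_drop_subwordAt (x : ℤ → σ) (a : ℤ) {m p q : ℕ} (h : p + q ≤ m) :
    ((subwordAt x a m).drop p).take q = subwordAt x (a + p) q := by
  refine List.ext_getElem (by simp; omega) fun i _ _ => ?_
  simp [subwordAt, add_assoc]

lemma subwordAt_shift (x : ℤ → σ) (a : ℤ) (m : ℕ) :
    subwordAt (shift x) a m = subwordAt x (a + 1) m := by
  simp only [subwordAt, shift, add_right_comm]

lemma occursAt_refl (w : List σ) : occursAt w w 0 := ⟨by simp, by simp⟩

lemma occursAt_subwordAt (x : ℤ → σ) (b : ℤ) {L p m : ℕ} (h : p + m ≤ L) :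
    occursAt (subwordAt x (b + p) m) (subwordAt x b L) p :=
  ⟨by simpa using h, by rw [length_subwordAt, take_drop_subwordAt x b h]⟩

lemma occursAt.take_drop_eq {w v : List σ} {p : ℕ} (h : occursAt w v p) {D K : ℕ}
    (hD : D + K ≤ w.length) : (w.drop D).take K = (v.drop (p + D)).take K := by
  conv_lhs => rw [← h.2]
  rw [List.drop_take, List.drop_drop, List.take_take]
  congr 1
  omega

lemma occursAt.trans {w v u : List σ} {p p' : ℕ} (h : occursAt w v p) (h' : occursAt v u p') :
    occursAt w u (p' + p) := by
  refine ⟨by have := h.1; have := h'.1; omega, ?_⟩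
  rw [← h'.take_drop_eq h.1, h.2]

lemma length_flatten_of_forall_length_eq {L : List (List σ)} {K : ℕ}
    (hL : ∀ u ∈ L, u.length = K) : L.flatten.length = L.length * K := by
  rw [List.length_flatten, List.map_congr_left hL, List.map_const', List.sum_replicate,
    smul_eq_mul]

lemma take_drop_flatten_of_forall_length_eq {L : List (List σ)} {K : ℕ}
    (hL : ∀ u ∈ L, u.length = K) {q : ℕ} (hq : q < L.length) :
    (L.flatten.drop (q * K)).take K = L[q] := by
  induction L generalizing q with
  | nil => simp at hq
  | cons u L ih =>
    have hu : u.length = K := hL u List.mem_cons_self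
    cases q with
    | zero => simp [List.take_left' hu]
    | succ q =>
      rw [List.flatten_cons, show (q + 1) * K = u.length + q * K by rw [hu]; ring,
        ← List.drop_drop, List.drop_left]
      exact ih (fun v hv => hL v (List.mem_cons_of_mem u hv)) _

end Words

lemma Kseq_succ (k : ℕ → ℕ) (n : ℕ) : Kseq k (n + 1) = Kseq k n * k n := rfl

/-- The paper's parsing condition at level `N`, without the normalisation `-K_N < a ≤ 0`. -/
def IsAligned {α : Type*} (k : ℕ → ℕ) (W : ℕ → Set (List α)) (N : ℕ) (x : ℤ → α) (a : ℤ) :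
    Prop :=
  ∀ j : ℤ, subwordAt x (a + j * Kseq k N) (Kseq k N) ∈ W N

namespace OdometerBasedCS
variable {α : Type*} [Fintype α] {k : ℕ → ℕ} {W : ℕ → Set (List α)}

lemma Kseq_pos (hW : OdometerBasedCS α k W) (n : ℕ) : 0 < Kseq k n := by
  induction n with
  | zero => exact Nat.one_pos
  | succ n ih => exact Nat.mul_pos ih (by have := hW.two_le n; omega)

lemma exists_eq_flatten (hW : OdometerBasedCS α k W) {n m : ℕ} (hnm : n ≤ m) {v : List α}
    (hv : v ∈ W m) : ∃ L : List (List α), (∀ u ∈ L, u ∈ W n) ∧ v = L.flatten := by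
  induction m, hnm using Nat.le_induction generalizing v with
  | base => exact ⟨[v], by simpa using hv, by simp⟩
  | succ m _ ih =>
    obtain ⟨g, hg, rfl⟩ := hW.concat m v hv
    choose L hL hgL using fun i => ih (hg i)
    refine ⟨(List.ofFn L).flatten, ?_, ?_⟩
    · simp only [List.mem_flatten, List.mem_ofFn]
      rintro u ⟨_, ⟨i, rfl⟩, hu⟩
      exact hL i u hu
    · rw [List.flatten_flatten, List.map_ofFn]
      exact congrArg _ (congrArg _ (funext hgL))

lemma take_drop_mem (hW : OdometerBasedCS α k W) {n m : ℕ} (hnm : n ≤ m) {v : List α}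
    (hv : v ∈ W m) {q : ℕ} (hq : (q + 1) * Kseq k n ≤ v.length) :
    (v.drop (q * Kseq k n)).take (Kseq k n) ∈ W n := by
  obtain ⟨L, hL, rfl⟩ := hW.exists_eq_flatten hnm hv
  have hlen : ∀ u ∈ L, u.length = Kseq k n := fun u hu => hW.length_eq n u (hL u hu)
  have hqL : q < L.length := by
    rw [length_flatten_of_forall_length_eq hlen] at hq
    exact Nat.le_of_mul_le_mul_right hq (hW.Kseq_pos n)
  rw [take_drop_flatten_of_forall_length_eq hlen hqL]
  exact hL _ (List.getElem_mem hqL)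

lemma exists_mem_occursAt (hW : OdometerBasedCS α k W) {n m : ℕ} (hnm : n ≤ m) {w : List α}
    (hw : w ∈ W n) : ∃ v ∈ W m, ∃ p, occursAt w v p := by
  induction m, hnm using Nat.le_induction with
  | base => exact ⟨w, hw, 0, occursAt_refl w⟩
  | succ m _ ih =>
    obtain ⟨v, hv, p, hp⟩ := ih
    obtain ⟨v', hv'⟩ := hW.nonempty (m + 1)
    obtain ⟨p', hp'⟩ := hW.subword m v hv v' hv'
    exact ⟨v', hv', p' + p, hp.trans hp'⟩

lemma exists_occursAt_of_mem_CSLimit (hW : OdometerBasedCS α k W) {x : ℤ → α}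
    (hx : x ∈ CSLimit W) (a : ℤ) (m N : ℕ) :
    ∃ n ≥ N, ∃ v ∈ W n, ∃ p, occursAt (subwordAt x a m) v p := by
  obtain ⟨n, w, hw, p, hp⟩ := hx a m
  obtain ⟨v, hv, p', hp'⟩ := hW.exists_mem_occursAt (le_max_left n N) hw
  exact ⟨max n N, le_max_right n N, v, hv, p' + p, hp.trans hp'⟩

lemma subwordAt_mem_of_occursAt (hW : OdometerBasedCS α k W) {n m : ℕ} (hnm : n ≤ m)
    {v : List α} (hv : v ∈ W m) {x : ℤ → α} {b : ℤ} {L p : ℕ}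
    (hocc : occursAt (subwordAt x b L) v p) {D q : ℕ} (hD : D + Kseq k n ≤ L)
    (hq : p + D = q * Kseq k n) : subwordAt x (b + D) (Kseq k n) ∈ W n := by
  have hlen := hocc.1
  rw [length_subwordAt] at hlen
  rw [← take_drop_subwordAt x b hD, hocc.take_drop_eq (by simpa using hD), hq]
  exact hW.take_drop_mem hnm hv (by rw [add_mul, ← hq]; omega)

lemma eq_of_subwordAt_mem (hW : OdometerBasedCS α k W) {N : ℕ} {x : ℤ → α} {a b : ℤ}
    (hb : subwordAt x b (Kseq k N) ∈ W N) (hb' : subwordAt x (b + Kseq k N) (Kseq k N) ∈ W N)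
    (ha : subwordAt x a (Kseq k N) ∈ W N) (h₁ : b ≤ a) (h₂ : a < b + Kseq k N) : a = b := by
  obtain ⟨p, rfl⟩ : ∃ p : ℕ, a = b + p := ⟨(a - b).toNat, by omega⟩
  have hocc : occursAt (subwordAt x (b + p) (Kseq k N))
      (subwordAt x b (Kseq k N) ++ subwordAt x (b + Kseq k N) (Kseq k N)) p := by
    rw [← subwordAt_add]
    exact occursAt_subwordAt x b (by omega)
  rcases hW.unique_readable N _ hb _ hb' _ ha p hocc with h | h <;> omega

end OdometerBasedCS

namespace IsAligned
variable {α : Type*} {k : ℕ → ℕ} {W : ℕ → Set (List α)} {N : ℕ} {x : ℤ → α}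
  {a : ℤ}

lemma shift (h : IsAligned k W N x a) : IsAligned k W N (shift x) (a - 1) := by
  intro j
  rw [subwordAt_shift]
  convert h j using 2
  ring

lemma of_succ [Fintype α] (hW : OdometerBasedCS α k W) (h : IsAligned k W (N + 1) x a) :
    IsAligned k W N x a := by
  intro j
  have hk : (0 : ℤ) < k N := by have := hW.two_le N; omega
  obtain ⟨i, hi⟩ : ∃ i : ℕ, (i : ℤ) = j % k N := ⟨(j % k N).toNat,
    Int.toNat_of_nonneg (Int.emod_nonneg _ hk.ne')⟩
  have hik : i < k N := by have := Int.emod_lt_of_pos j hk; omega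
  have hblock := hW.take_drop_mem (Nat.le_succ N) (h (j / k N)) (q := i)
    (by rw [length_subwordAt, Kseq_succ, mul_comm (Kseq k N)]; gcongr; omega)
  rw [take_drop_subwordAt x _ (by rw [Kseq_succ]; nlinarith)] at hblock
  convert hblock using 2
  push_cast [Kseq_succ, hi]
  linear_combination (Kseq k N : ℤ) * (Int.mul_ediv_add_emod j (k N)).symm

lemma dvd_sub [Fintype α] (hW : OdometerBasedCS α k W) {b : ℤ} (hb : IsAligned k W N x b)
    (ha : subwordAt x a (Kseq k N) ∈ W N) : (Kseq k N : ℤ) ∣ a - b := by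
  have hK : (0 : ℤ) < Kseq k N := by exact_mod_cast hW.Kseq_pos N
  set j := (a - b) / Kseq k N
  have hdiv := Int.mul_ediv_add_emod (a - b) (Kseq k N)
  have h₀ := Int.emod_nonneg (a - b) hK.ne'
  have h₁ := Int.emod_lt_of_pos (a - b) hK
  have := hW.eq_of_subwordAt_mem (hb j) (by simpa [add_mul, add_assoc] using hb (j + 1)) ha
    (by linarith) (by linarith)
  exact ⟨j, by linarith⟩

end IsAligned

namespace OdometerBasedCS
variable {α : Type*} [Fintype α] {k : ℕ → ℕ} {W : ℕ → Set (List α)}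

/-- Read `x` on the window `[-(M+1)K_N, (M+1)K_N)` inside a word of some `W m`, `m ≥ N`, and
cut it along the level-`N` words of that word. -/
lemma exists_window (hW : OdometerBasedCS α k W) {x : ℤ → α} (hx : x ∈ CSLimit W) (N M : ℕ) :
    ∃ r < Kseq k N, ∀ j : ℤ, -M ≤ j → j < M →
      subwordAt x (-r + j * Kseq k N) (Kseq k N) ∈ W N := by
  set K := Kseq k N
  have hK : 0 < K := hW.Kseq_pos N
  obtain ⟨m, hNm, v, hv, p, hocc⟩ :=
    hW.exists_occursAt_of_mem_CSLimit hx (-((M + 1) * K : ℕ)) (2 * ((M + 1) * K)) N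
  -- `x 0` sits at position `p + (M+1)K = K t + r` of `v`
  obtain ⟨t, r, hr, hs⟩ : ∃ t r, r < K ∧ p + (M + 1) * K = K * t + r :=
    ⟨_, _, Nat.mod_lt _ hK, (Nat.div_add_mod _ K).symm⟩
  have hMt : M + 1 ≤ t := by nlinarith
  refine ⟨r, hr, fun j hj₁ hj₂ => ?_⟩
  have hjK : -(M : ℤ) * K ≤ j * K := by gcongr
  have hjK' : j * K ≤ ((M : ℤ) - 1) * K := by gcongr; omega
  obtain ⟨D, hD⟩ : ∃ D : ℕ, (D : ℤ) = (M + 1) * K - r + j * K :=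
    ⟨_, Int.toNat_of_nonneg (by linarith)⟩
  obtain ⟨q, hq⟩ : ∃ q : ℕ, (q : ℤ) = t + j := ⟨_, Int.toNat_of_nonneg (by omega)⟩
  have hDK : (D : ℤ) + K ≤ 2 * ((M + 1) * K) := by rw [hD]; linarith
  have hpD : (p : ℤ) + D = q * K := by
    have hs' : (p : ℤ) + (M + 1) * K = K * t + r := by exact_mod_cast hs
    rw [hD, hq]
    linear_combination hs'
  have hmem := hW.subwordAt_mem_of_occursAt hNm hv hocc (D := D) (q := q)
    (by exact_mod_cast hDK) (by exact_mod_cast hpD)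
  convert hmem using 2
  rw [hD]
  push_cast
  ring

lemma exists_isAligned (hW : OdometerBasedCS α k W) {x : ℤ → α} (hx : x ∈ CSLimit W) (N : ℕ) :
    ∃ r : ℕ, IsAligned k W N x (-r) := by
  choose r hrK hr using hW.exists_window hx N
  obtain ⟨r₀, hr₀⟩ := Finite.exists_infinite_fiber fun M => (⟨r M, hrK M⟩ : Fin (Kseq k N))
  refine ⟨r₀, fun j => ?_⟩
  obtain ⟨M, hM, hjM⟩ := (Set.infinite_coe_iff.1 hr₀).exists_gt j.natAbs
  have hrM : r M = r₀ := congrArg Fin.val hM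
  exact hrM ▸ hr M j (by omega) (by omega)

end OdometerBasedCS

section Parsing
variable {α : Type*} {k : ℕ → ℕ} {W : ℕ → Set (List α)}

open Classical in
/-- The paper's `r_N(x)`: the least `r` such that `x` is aligned at `-r` on level `N`
(`0` if there is none), chosen through `Nat.find` so that it is measurable. -/
noncomputable def parseOffset (k : ℕ → ℕ) (W : ℕ → Set (List α)) (N : ℕ) (x : ℤ → α) : ℕ :=
  Nat.find (p := fun r : ℕ => IsAligned k W N x (-r) ∨ ¬∃ r' : ℕ, IsAligned k W N x (-r'))
    ((_root_.em _).elim (fun ⟨r, hr⟩ => ⟨r, .inl hr⟩) fun h => ⟨0, .inr h⟩)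

lemma isAligned_neg_parseOffset {N : ℕ} {x : ℤ → α} (h : ∃ r : ℕ, IsAligned k W N x (-r)) :
    IsAligned k W N x (-(parseOffset k W N x)) := by
  rw [parseOffset]
  generalize_proofs hp
  convert (Nat.find_spec hp).resolve_right (not_not.2 h)

variable [Fintype α]

lemma natCast_parseOffset (hW : OdometerBasedCS α k W) {N : ℕ} {x : ℤ → α} (hx : x ∈ CSLimit W)
    {a : ℤ} (ha : IsAligned k W N x a) :
    (parseOffset k W N x : ZMod (Kseq k N)) = ((-a : ℤ) : ZMod (Kseq k N)) := by
  have hdvd := (isAligned_neg_parseOffset (hW.exists_isAligned hx N)).dvd_sub hW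
    (by simpa using ha 0)
  rw [← Int.cast_natCast, ZMod.intCast_eq_intCast_iff_dvd_sub]
  rwa [show a - -(parseOffset k W N x : ℤ) = -(-a - parseOffset k W N x) by ring, dvd_neg]
    at hdvd

variable [MeasurableSpace α] [DiscreteMeasurableSpace α]

lemma measurableSet_subwordAt_mem (a : ℤ) (m : ℕ) (S : Set (List α)) :
    MeasurableSet {x : ℤ → α | subwordAt x a m ∈ S} :=
  have hwindow : Measurable fun (x : ℤ → α) (i : Fin m) => x (a + i) :=
    measurable_pi_lambda _ fun _ => measurable_pi_apply _
  hwindow (Set.toFinite {f : Fin m → α | List.ofFn f ∈ S}).measurableSet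

lemma measurableSet_CSLimit : MeasurableSet (CSLimit W) := by
  simp only [CSLimit, Set.ofPred_forall]
  exact .iInter fun a => .iInter fun m =>
    measurableSet_subwordAt_mem a m {l | ∃ n, ∃ w ∈ W n, ∃ p, occursAt l w p}

lemma measurableSet_isAligned (N : ℕ) (a : ℤ) :
    MeasurableSet {x : ℤ → α | IsAligned k W N x a} := by
  simp only [IsAligned, Set.ofPred_forall]
  exact .iInter fun j => measurableSet_subwordAt_mem _ _ _

lemma measurable_parseOffset (N : ℕ) : Measurable (parseOffset k W N) := by
  classical
  refine measurable_find _ fun r => ?_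
  simp only [Set.ofPred_or, ← Set.compl_ofPred, Set.ofPred_exists]
  exact (measurableSet_isAligned N _).union (.compl (.iUnion fun r' => measurableSet_isAligned N _))

end Parsing

section ParsingMap
variable {α : Type*} {k : ℕ → ℕ} {W : ℕ → Set (List α)}

/-- The coordinates `r_{n+1}(x) mod K_{n+1}` of the parsing map, before checking that they are
compatible. -/
noncomputable def parsingVec (k : ℕ → ℕ) (W : ℕ → Set (List α)) (x : ℤ → α) :
    ∀ n : ℕ, ZMod (Kseq k (n + 1)) :=
  fun n => parseOffset k W (n + 1) x

open Classical in
/-- The parsing map `φ`, sent to `0` off the (measurable) set where `parsingVec` is compatible. -/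
noncomputable def parsingMap (k : ℕ → ℕ) (W : ℕ → Set (List α)) (x : ℤ → α) : Odometer k :=
  ⟨if parsingVec k W x ∈ odometerSubgroup k then parsingVec k W x else 0, by
    split_ifs with h
    exacts [h, zero_mem _]⟩

variable [Fintype α]

lemma parsingVec_mem (hW : OdometerBasedCS α k W) {x : ℤ → α} (hx : x ∈ CSLimit W) :
    parsingVec k W x ∈ odometerSubgroup k := by
  intro n
  have hr := (isAligned_neg_parseOffset (hW.exists_isAligned hx (n + 2))).of_succ hW
  change ZMod.castHom _ (ZMod (Kseq k (n + 1)))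
    ((parseOffset k W (n + 2) x : ℕ) : ZMod (Kseq k (n + 1) * k (n + 1))) =
    (parseOffset k W (n + 1) x : ZMod (Kseq k (n + 1)))
  rw [map_natCast, natCast_parseOffset hW hx hr, neg_neg, Int.cast_natCast]

lemma coe_parsingMap (hW : OdometerBasedCS α k W) {x : ℤ → α} (hx : x ∈ CSLimit W) :
    (parsingMap k W x : ∀ n : ℕ, ZMod (Kseq k (n + 1))) = parsingVec k W x := by
  simp only [parsingMap]
  exact if_pos (parsingVec_mem hW hx)

lemma parsingMap_apply (hW : OdometerBasedCS α k W) {x : ℤ → α} (hx : x ∈ CSLimit W) {n : ℕ}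
    {a : ℤ} (ha : IsAligned k W (n + 1) x a) :
    (parsingMap k W x).1 n = ((-a : ℤ) : ZMod (Kseq k (n + 1))) := by
  rw [coe_parsingMap hW hx, parsingVec, natCast_parseOffset hW hx ha]

omit [Fintype α] in
lemma shift_mem_CSLimit {x : ℤ → α} (hx : x ∈ CSLimit W) : shift x ∈ CSLimit W := by
  intro a m
  rw [subwordAt_shift]
  exact hx (a + 1) m

lemma parsingMap_shift (hW : OdometerBasedCS α k W) {x : ℤ → α} (hx : x ∈ CSLimit W) :
    parsingMap k W (shift x) = odoMap k (parsingMap k W x) := by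
  ext n
  have hr := isAligned_neg_parseOffset (hW.exists_isAligned hx (n + 1))
  rw [parsingMap_apply hW (shift_mem_CSLimit hx) hr.shift, odoMap, AddSubgroup.coe_add,
    Pi.add_apply, coe_parsingMap hW hx, parsingVec, oneBar]
  push_cast
  ring

variable [MeasurableSpace α] [DiscreteMeasurableSpace α]

lemma measurableSet_odometerSubgroup (hK : ∀ n, 0 < Kseq k n) :
    MeasurableSet (odometerSubgroup k : Set (∀ n : ℕ, ZMod (Kseq k (n + 1)))) := by
  change MeasurableSet {x | odoCompat k x}
  simp only [odoCompat, Set.ofPred_forall]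
  refine .iInter fun n => ?_
  have := NeZero.of_pos (hK (n + 1))
  exact measurableSet_eq_fun (measurable_from_top.comp (measurable_pi_apply _))
    (measurable_pi_apply n)

lemma measurable_parsingMap (hW : OdometerBasedCS α k W) : Measurable (parsingMap k W) := by
  have hvec : Measurable (parsingVec k W) := measurable_pi_lambda _ fun n =>
    measurable_from_nat.comp (measurable_parseOffset (n + 1))
  exact (Measurable.ite (hvec (measurableSet_odometerSubgroup hW.Kseq_pos)) hvec
    measurable_const).subtype_mk

end ParsingMap

namespace Odometer
variable {k : ℕ → ℕ}

instance : MeasurableAdd (Odometer k) where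
  measurable_const_add g := ((measurable_const_add g.1).comp measurable_subtype_coe).subtype_mk
  measurable_add_const g := ((measurable_add_const g.1).comp measurable_subtype_coe).subtype_mk

lemma odoMap_iterate_apply (m : ℕ) (y : Odometer k) (n : ℕ) :
    ((odoMap k)^[m] y).1 n = y.1 n + m := by
  induction m generalizing y with
  | zero => rw [Function.iterate_zero_apply, Nat.cast_zero, add_zero]
  | succ m ih =>
    rw [Function.iterate_succ_apply', odoMap, AddSubgroup.coe_add, Pi.add_apply, ih,
      Nat.cast_succ, ← add_assoc]
    rfl

lemma measurableSpace_eq_generateFrom :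
    (inferInstance : MeasurableSpace (Odometer k)) =
      MeasurableSpace.generateFrom (⋃ n, Set.range (Set.preimage fun y : Odometer k => y.1 n)) := by
  refine le_antisymm ?_ (MeasurableSpace.generateFrom_le ?_)
  · have hcoe : Measurable[MeasurableSpace.generateFrom _]
        (Subtype.val : Odometer k → ∀ n : ℕ, ZMod (Kseq k (n + 1))) :=
      (@measurable_pi_iff _ _ _ (MeasurableSpace.generateFrom _) _ _).2 fun n S _ =>
        MeasurableSpace.measurableSet_generateFrom (Set.mem_iUnion.2 ⟨n, Set.mem_range_self S⟩)
    exact hcoe.comap_le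
  · simp only [Set.mem_iUnion, Set.mem_range]
    rintro _ ⟨n, S, rfl⟩
    exact ((measurable_pi_apply n).comp measurable_subtype_coe) (MeasurableSet.of_discrete)

lemma isPiSystem_iUnion_range_preimage :
    IsPiSystem (⋃ n, Set.range (Set.preimage fun y : Odometer k => y.1 n)) := by
  refine isPiSystem_iUnion_of_monotone _ (fun n => ?_) (monotone_nat_of_le_succ fun n => ?_)
  · rintro _ ⟨S, rfl⟩ _ ⟨T, rfl⟩ -
    exact ⟨S ∩ T, rfl⟩
  · rintro _ ⟨S, rfl⟩
    refine ⟨ZMod.castHom (dvd_mul_right (Kseq k (n + 1)) (k (n + 1))) (ZMod (Kseq k (n + 1))) ⁻¹' S,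
      ?_⟩
    ext y
    exact iff_of_eq (congrArg (· ∈ S) (y.2 n))

lemma map_const_add_eq_self (hK : ∀ n, 0 < Kseq k n) {μ : Measure (Odometer k)}
    [IsFiniteMeasure μ] (hμ : MeasurePreserving (odoMap k) μ μ) (g : Odometer k) :
    μ.map (g + ·) = μ := by
  refine ext_of_generate_finite _ measurableSpace_eq_generateFrom isPiSystem_iUnion_range_preimage
    ?_ (by rw [Measure.map_apply (measurable_const_add g) .univ, Set.preimage_univ])
  simp only [Set.mem_iUnion, Set.mem_range]
  rintro _ ⟨n, S, rfl⟩
  have := NeZero.of_pos (hK (n + 1))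
  have hS : MeasurableSet ((fun y : Odometer k => y.1 n) ⁻¹' S) :=
    ((measurable_pi_apply n).comp measurable_subtype_coe) (MeasurableSet.of_discrete)
  -- translating by `g` moves the `n`-th coordinate as `(g_n).val` steps of `T_O` do
  have hgm : (g + ·) ⁻¹' ((fun y : Odometer k => y.1 n) ⁻¹' S) =
      (odoMap k)^[(g.1 n).val] ⁻¹' ((fun y : Odometer k => y.1 n) ⁻¹' S) := by
    ext y
    rw [Set.mem_preimage, Set.mem_preimage, Set.mem_preimage, Set.mem_preimage,
      odoMap_iterate_apply, ZMod.natCast_zmod_val, AddSubgroup.coe_add, Pi.add_apply,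
      add_comm (g.1 n)]
  rw [Measure.map_apply (measurable_const_add g) hS, hgm,
    (hμ.iterate _).measure_preimage hS.nullMeasurableSet]

end Odometer

lemma measurePreserving_odoMap_map_parsingMap {α : Type*} [Fintype α] [MeasurableSpace α]
    [DiscreteMeasurableSpace α] {k : ℕ → ℕ} {W : ℕ → Set (List α)} (hW : OdometerBasedCS α k W)
    {ν : Measure (ℤ → α)} (hinv : ν.map shift = ν) (hsupp : ∀ᵐ x ∂ν, x ∈ CSLimit W) :
    MeasurePreserving (odoMap k) (ν.map (parsingMap k W)) (ν.map (parsingMap k W)) := by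
  have hφ := measurable_parsingMap hW
  have hshift : Measurable (shift : (ℤ → α) → ℤ → α) :=
    measurable_pi_lambda _ fun _ => measurable_pi_apply _
  refine ⟨measurable_add_const _, ?_⟩
  calc (ν.map (parsingMap k W)).map (odoMap k)
      = ν.map (odoMap k ∘ parsingMap k W) := Measure.map_map (measurable_add_const _) hφ
    _ = ν.map (parsingMap k W ∘ shift) :=
        Measure.map_congr (hsupp.mono fun x hx => (parsingMap_shift hW hx).symm)
    _ = ν.map (parsingMap k W) := by rw [← Measure.map_map hφ hshift, hinv]

/-- for any shift-invariant Borel probability measure `ν` on the limit `K` of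
an odometer based construction sequence, the parsing map `φ : K → O`
(`φ(x)_n = r_{n+1}(x) mod K_{n+1}`, where `r_{n+1}(x) = -a` for the unique level-`(n+1)`
parsing offset `a` of `x`) is Borel measurable, intertwines the shift with `T_O`, and pushes
`ν` forward to the Haar probability measure on `O`. -/
theorem parsing_map_pushes_invariant_measure_to_haar
    {α : Type} [Fintype α] [MeasurableSpace α] [DiscreteMeasurableSpace α]
    (k : ℕ → ℕ) (W : ℕ → Set (List α)) (hW : OdometerBasedCS α k W)
    (ν : Measure (ℤ → α)) (hprob : IsProbabilityMeasure ν)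
    (hinv : Measure.map shift ν = ν) (hsupp : ν (CSLimit W) = 1) :
    ∃ φ : (ℤ → α) → Odometer k,
      (∀ x ∈ CSLimit W, ∀ n : ℕ, ∀ a : ℤ,
          (-(Kseq k (n + 1) : ℤ) < a ∧ a ≤ 0 ∧
            ∀ j : ℤ, subwordAt x (a + j * (Kseq k (n + 1) : ℤ)) (Kseq k (n + 1)) ∈ W (n + 1)) →
          (φ x).1 n = ((-a : ℤ) : ZMod (Kseq k (n + 1)))) ∧
      Measurable φ ∧
      (∀ x ∈ CSLimit W, φ (shift x) = odoMap k (φ x)) ∧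
      IsHaarProb (Measure.map φ ν) := by
  have hae : ∀ᵐ x ∂ν, x ∈ CSLimit W :=
    ae_iff.2 ((prob_compl_eq_zero_iff measurableSet_CSLimit).2 hsupp)
  have hφ := measurable_parsingMap hW
  have hμ := Measure.isProbabilityMeasure_map (μ := ν) hφ.aemeasurable
  exact ⟨parsingMap k W, fun x hx n a ha => parsingMap_apply hW hx ha.2.2, hφ,
    fun x hx => parsingMap_shift hW hx, hμ, Odometer.map_const_add_eq_self hW.Kseq_pos
      (measurePreserving_odoMap_map_parsingMap hW hinv hae)⟩

end OdoPaper
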